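/- For every integer n ≥ 1: 21·σ₅(n) = 10(3n−1)·σ₃(n) + σ₁(n) + 240·Σ_{i+j=n} σ₁(i)·σ₃(j), where the sum is over ordered pairs of positive integers (i,j) with i + j = n. (This is the q-coefficient identity obtained from 7E₆ = 2E₂E₄ + πi·δ₄E₄; the printed version in the paper omits the term σ₁(n).) -/
import Mathlib

open Finset

/-- the divisor power sum `σ_k(n) = Σ_{d∣n} d^k` -/
def sigmaNat (k n : ℕ) : ℕ := ∑ d ∈ n.divisors, d ^ k

/-! ### Auxiliary setup: the solution set of `a*x + b*y = n` -/

/-- the finite set of quadruples `(a,b,x,y)` of positive integers with `a*x + b*y = n`. -/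
def Tset (n : ℕ) : Finset (ℕ × ℕ × ℕ × ℕ) :=
  (Finset.Ico 1 n ×ˢ Finset.Ico 1 n ×ˢ Finset.Ico 1 n ×ˢ Finset.Ico 1 n).filter
    (fun p => p.1 * p.2.2.1 + p.2.1 * p.2.2.2 = n)

lemma mem_Tset {n a b x y : ℕ} :
    (a, b, x, y) ∈ Tset n ↔ 0 < a ∧ 0 < b ∧ 0 < x ∧ 0 < y ∧ a * x + b * y = n := by
  simp only [Tset, mem_filter, mem_product, mem_Ico]
  constructor
  · rintro ⟨⟨⟨ha1, _⟩, ⟨hb1, _⟩, ⟨hx1, _⟩, ⟨hy1, _⟩⟩, heq⟩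
    exact ⟨ha1, hb1, hx1, hy1, heq⟩
  · rintro ⟨ha, hb, hx, hy, heq⟩
    have hax : a ≤ a * x := Nat.le_mul_of_pos_right a hx
    have hxa : x ≤ a * x := Nat.le_mul_of_pos_left x ha
    have hby : b ≤ b * y := Nat.le_mul_of_pos_right b hy
    have hyb : y ≤ b * y := Nat.le_mul_of_pos_left y hb
    have h1 : 0 < a * x := Nat.mul_pos ha hx
    have h2 : 0 < b * y := Nat.mul_pos hb hy
    exact ⟨⟨⟨ha, by omega⟩, ⟨hb, by omega⟩, ⟨hx, by omega⟩, ⟨hy, by omega⟩⟩, heq⟩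

/-- swap bijection `(a,b,x,y) ↦ (b,a,y,x)` on a filtered region. -/
lemma sum_swap_region (n : ℕ) (P : ℕ × ℕ × ℕ × ℕ → Prop) [DecidablePred P]
    (F : ℕ → ℕ → ℕ → ℕ → ℤ) :
    ∑ p ∈ (Tset n).filter P, F p.1 p.2.1 p.2.2.1 p.2.2.2
      = ∑ p ∈ (Tset n).filter (fun p => P (p.2.1, p.1, p.2.2.2, p.2.2.1)),
          F p.2.1 p.1 p.2.2.2 p.2.2.1 := by
  refine Finset.sum_nbij' (fun p => (p.2.1, p.1, p.2.2.2, p.2.2.1))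
    (fun p => (p.2.1, p.1, p.2.2.2, p.2.2.1)) ?_ ?_ ?_ ?_ ?_
  · rintro ⟨a, b, x, y⟩ hp
    simp only [mem_filter] at hp ⊢
    obtain ⟨hT, hP⟩ := hp
    rw [mem_Tset] at hT
    exact ⟨mem_Tset.2 ⟨hT.2.1, hT.1, hT.2.2.2.1, hT.2.2.1, by omega⟩, hP⟩
  · rintro ⟨a, b, x, y⟩ hp
    simp only [mem_filter] at hp ⊢
    obtain ⟨hT, hP⟩ := hp
    rw [mem_Tset] at hT
    exact ⟨mem_Tset.2 ⟨hT.2.1, hT.1, hT.2.2.2.1, hT.2.2.1, by omega⟩, hP⟩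
  · rintro ⟨a, b, x, y⟩ _; rfl
  · rintro ⟨a, b, x, y⟩ _; rfl
  · rintro ⟨a, b, x, y⟩ _; rfl

/-- swap bijection on the whole set. -/
lemma sum_swap_all (n : ℕ) (F : ℕ → ℕ → ℕ → ℕ → ℤ) :
    ∑ p ∈ Tset n, F p.1 p.2.1 p.2.2.1 p.2.2.2
      = ∑ p ∈ Tset n, F p.2.1 p.1 p.2.2.2 p.2.2.1 := by
  refine Finset.sum_nbij' (fun p => (p.2.1, p.1, p.2.2.2, p.2.2.1))
    (fun p => (p.2.1, p.1, p.2.2.2, p.2.2.1)) ?_ ?_ ?_ ?_ ?_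
  · rintro ⟨a, b, x, y⟩ hp
    simp only [mem_Tset] at hp ⊢
    obtain ⟨ha, hb, hx, hy, heq⟩ := hp
    exact ⟨hb, ha, hy, hx, by omega⟩
  · rintro ⟨a, b, x, y⟩ hp
    simp only [mem_Tset] at hp ⊢
    obtain ⟨ha, hb, hx, hy, heq⟩ := hp
    exact ⟨hb, ha, hy, hx, by omega⟩
  · rintro ⟨a, b, x, y⟩ _; rfl
  · rintro ⟨a, b, x, y⟩ _; rfl
  · rintro ⟨a, b, x, y⟩ _; rfl

/-- the key Liouville-type bijection: `(a,b,x,y) ↦ (a-b, b, x, x+y)` maps the region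
`b < a` onto the region `x < y`. -/
lemma sum_phi (n : ℕ) (F : ℕ → ℕ → ℕ → ℕ → ℤ) :
    ∑ p ∈ (Tset n).filter (fun p => p.2.1 < p.1), F p.1 p.2.1 p.2.2.1 p.2.2.2
      = ∑ p ∈ (Tset n).filter (fun p => p.2.2.1 < p.2.2.2),
          F (p.1 + p.2.1) p.2.1 p.2.2.1 (p.2.2.2 - p.2.2.1) := by
  refine Finset.sum_nbij' (fun p => (p.1 - p.2.1, p.2.1, p.2.2.1, p.2.2.1 + p.2.2.2))
    (fun p => (p.1 + p.2.1, p.2.1, p.2.2.1, p.2.2.2 - p.2.2.1)) ?_ ?_ ?_ ?_ ?_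
  · rintro ⟨a, b, x, y⟩ hp
    simp only [mem_filter] at hp ⊢
    obtain ⟨hT, hP⟩ := hp
    rw [mem_Tset] at hT
    obtain ⟨ha, hb, hx, hy, heq⟩ := hT
    have hsub : (a - b) * x = a * x - b * x := Nat.sub_mul a b x
    have hmul : b * (x + y) = b * x + b * y := Nat.mul_add b x y
    have hle : b * x ≤ a * x := Nat.mul_le_mul_right x (le_of_lt hP)
    refine ⟨mem_Tset.2 ⟨by omega, hb, hx, by omega, by omega⟩, by omega⟩
  · rintro ⟨a, b, x, y⟩ hp
    simp only [mem_filter] at hp ⊢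
    obtain ⟨hT, hP⟩ := hp
    rw [mem_Tset] at hT
    obtain ⟨ha, hb, hx, hy, heq⟩ := hT
    have hsub : b * (y - x) = b * y - b * x := Nat.mul_sub b y x
    have hadd : (a + b) * x = a * x + b * x := Nat.add_mul a b x
    have hle : b * x ≤ b * y := Nat.mul_le_mul_left b (le_of_lt hP)
    refine ⟨mem_Tset.2 ⟨by omega, hb, hx, by omega, by omega⟩, by omega⟩
  · rintro ⟨a, b, x, y⟩ hp
    simp only [mem_filter] at hp
    have : b ≤ a := le_of_lt hp.2
    dsimp only
    simp only [Prod.mk.injEq]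
    exact ⟨by omega, trivial, trivial, by omega⟩
  · rintro ⟨a, b, x, y⟩ hp
    simp only [mem_filter] at hp
    have : x ≤ y := le_of_lt hp.2
    dsimp only
    simp only [Prod.mk.injEq]
    exact ⟨by omega, trivial, trivial, by omega⟩
  · rintro ⟨a, b, x, y⟩ hp
    simp only [mem_filter] at hp
    have h1 : a - b + b = a := by omega
    have h2 : x + y - x = y := by omega
    dsimp only
    rw [h1]
    congr 1
    omega

/-- boundary `a = b`: reduces to a sum over divisors. -/
lemma sum_diag_ab (n : ℕ) (F : ℕ → ℕ → ℕ → ℕ → ℤ) :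
    ∑ p ∈ (Tset n).filter (fun p => p.1 = p.2.1), F p.1 p.2.1 p.2.2.1 p.2.2.2
      = ∑ d ∈ n.divisors, ∑ x ∈ Finset.Ico 1 (n / d), F d d x (n / d - x) := by
  rw [Finset.sum_sigma' n.divisors (fun d => Finset.Ico 1 (n / d))
    (fun d x => F d d x (n / d - x))]
  refine (Finset.sum_nbij' (fun z => (z.1, z.1, z.2, n / z.1 - z.2))
    (fun p => ⟨p.1, p.2.2.1⟩) ?_ ?_ ?_ ?_ ?_).symm
  · rintro ⟨d, x⟩ hz
    dsimp only
    simp only [Finset.mem_sigma, Nat.mem_divisors, mem_Ico] at hz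
    obtain ⟨⟨hdvd, hn0⟩, hx1, hxe⟩ := hz
    have hd : 0 < d := Nat.pos_of_dvd_of_pos hdvd (Nat.pos_of_ne_zero hn0)
    have hmul : d * (n / d) = n := Nat.mul_div_cancel' hdvd
    have hsub : d * (n / d - x) = d * (n / d) - d * x := Nat.mul_sub d _ x
    have hle : d * x ≤ d * (n / d) := Nat.mul_le_mul_left d (le_of_lt hxe)
    have hxx : x ≤ d * x := Nat.le_mul_of_pos_left x hd
    rw [mem_filter]
    refine ⟨mem_Tset.2 ⟨hd, hd, ?_, ?_, ?_⟩, rfl⟩ <;> omega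
  · rintro ⟨a, b, x, y⟩ hp
    simp only [mem_filter] at hp
    obtain ⟨hT, hab⟩ := hp
    rw [mem_Tset] at hT
    obtain ⟨ha, hb, hx, hy, heq⟩ := hT
    subst hab
    have hmul : a * (x + y) = n := by rw [Nat.mul_add]; omega
    have hdvd : a ∣ n := ⟨x + y, hmul.symm⟩
    have hdiv : n / a = x + y := by rw [← hmul, Nat.mul_div_cancel_left _ ha]
    have h1 : 0 < a * x := Nat.mul_pos ha hx
    have h2 : 0 < a * y := Nat.mul_pos ha hy
    simp only [Finset.mem_sigma, Nat.mem_divisors, mem_Ico]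
    refine ⟨⟨hdvd, ?_⟩, ?_, ?_⟩ <;> omega
  · rintro ⟨d, x⟩ hz; rfl
  · rintro ⟨a, b, x, y⟩ hp
    simp only [mem_filter] at hp
    obtain ⟨hT, hab⟩ := hp
    rw [mem_Tset] at hT
    obtain ⟨ha, hb, hx, hy, heq⟩ := hT
    subst hab
    have hmul : a * (x + y) = n := by rw [Nat.mul_add]; omega
    have hdiv : n / a = x + y := by rw [← hmul, Nat.mul_div_cancel_left _ ha]
    dsimp only
    rw [show n / a - x = y by omega]
  · rintro ⟨d, x⟩ hz; rfl

/-- boundary `x = y`: reduces to a sum over divisors. -/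
lemma sum_diag_xy (n : ℕ) (F : ℕ → ℕ → ℕ → ℕ → ℤ) :
    ∑ p ∈ (Tset n).filter (fun p => p.2.2.1 = p.2.2.2), F p.1 p.2.1 p.2.2.1 p.2.2.2
      = ∑ d ∈ n.divisors, ∑ a ∈ Finset.Ico 1 d, F a (d - a) (n / d) (n / d) := by
  rw [Finset.sum_sigma' n.divisors (fun d => Finset.Ico 1 d)
    (fun d a => F a (d - a) (n / d) (n / d))]
  refine (Finset.sum_nbij' (fun z => (z.2, z.1 - z.2, n / z.1, n / z.1))
    (fun p => ⟨p.1 + p.2.1, p.1⟩) ?_ ?_ ?_ ?_ ?_).symm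
  · rintro ⟨d, a⟩ hz
    dsimp only
    simp only [Finset.mem_sigma, Nat.mem_divisors, mem_Ico] at hz
    obtain ⟨⟨hdvd, hn0⟩, ha1, had⟩ := hz
    have hmul : d * (n / d) = n := Nat.mul_div_cancel' hdvd
    have he : 0 < n / d := by
      rcases Nat.eq_zero_or_pos (n / d) with h | h
      · rw [h, Nat.mul_zero] at hmul; omega
      · exact h
    have hsub : (d - a) * (n / d) = d * (n / d) - a * (n / d) := Nat.sub_mul d a _
    have hle : a * (n / d) ≤ d * (n / d) := Nat.mul_le_mul_right _ (le_of_lt had)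
    rw [mem_filter]
    refine ⟨mem_Tset.2 ⟨?_, ?_, he, he, ?_⟩, rfl⟩ <;> omega
  · rintro ⟨a, b, x, y⟩ hp
    simp only [mem_filter] at hp
    obtain ⟨hT, hxy⟩ := hp
    rw [mem_Tset] at hT
    obtain ⟨ha, hb, hx, hy, heq⟩ := hT
    subst hxy
    have hmul : (a + b) * x = n := by rw [Nat.add_mul]; omega
    have hdvd : a + b ∣ n := ⟨x, hmul.symm⟩
    have hdiv : n / (a + b) = x := by rw [← hmul, Nat.mul_div_cancel_left _ (by omega)]
    have h1 : 0 < a * x := Nat.mul_pos ha hx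
    have h2 : 0 < b * x := Nat.mul_pos hb hx
    simp only [Finset.mem_sigma, Nat.mem_divisors, mem_Ico]
    refine ⟨⟨hdvd, ?_⟩, ?_, ?_⟩ <;> omega
  · rintro ⟨d, a⟩ hz
    simp only [Finset.mem_sigma, mem_Ico] at hz
    dsimp only
    rw [show a + (d - a) = d by omega]
  · rintro ⟨a, b, x, y⟩ hp
    simp only [mem_filter] at hp
    obtain ⟨hT, hxy⟩ := hp
    rw [mem_Tset] at hT
    obtain ⟨ha, hb, hx, hy, heq⟩ := hT
    subst hxy
    have hmul : (a + b) * x = n := by rw [Nat.add_mul]; omega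
    have hdiv : n / (a + b) = x := by rw [← hmul, Nat.mul_div_cancel_left _ (by omega)]
    dsimp only
    rw [show a + b - a = b by omega, hdiv]
  · rintro ⟨d, a⟩ hz; rfl

/-- decomposition of `Tset n` according to divisor pairs of `i` and `n - i`. -/
lemma sum_conv (n : ℕ) (F : ℕ → ℕ → ℕ → ℕ → ℤ) :
    ∑ p ∈ Tset n, F p.1 p.2.1 p.2.2.1 p.2.2.2
      = ∑ i ∈ Finset.Ico 1 n, ∑ q ∈ i.divisorsAntidiagonal,
          ∑ r ∈ (n - i).divisorsAntidiagonal, F q.1 r.1 q.2 r.2 := by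
  have h1 : ∀ i ∈ Finset.Ico 1 n, ∑ q ∈ i.divisorsAntidiagonal,
      ∑ r ∈ (n - i).divisorsAntidiagonal, F q.1 r.1 q.2 r.2
      = ∑ z ∈ i.divisorsAntidiagonal ×ˢ (n - i).divisorsAntidiagonal,
          F z.1.1 z.2.1 z.1.2 z.2.2 := by
    intro i _
    rw [Finset.sum_product]
  rw [Finset.sum_congr rfl h1, Finset.sum_sigma' (Finset.Ico 1 n)
    (fun i => i.divisorsAntidiagonal ×ˢ (n - i).divisorsAntidiagonal)
    (fun i z => F z.1.1 z.2.1 z.1.2 z.2.2)]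
  refine Finset.sum_nbij' (fun p => ⟨p.1 * p.2.2.1, (p.1, p.2.2.1), (p.2.1, p.2.2.2)⟩)
    (fun z => (z.2.1.1, z.2.2.1, z.2.1.2, z.2.2.2)) ?_ ?_ ?_ ?_ ?_
  · rintro ⟨a, b, x, y⟩ hp
    rw [mem_Tset] at hp
    obtain ⟨ha, hb, hx, hy, heq⟩ := hp
    have h1 : 0 < a * x := Nat.mul_pos ha hx
    have h2 : 0 < b * y := Nat.mul_pos hb hy
    simp only [Finset.mem_sigma, Finset.mem_product, Nat.mem_divisorsAntidiagonal, mem_Ico]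
    refine ⟨⟨?_, ?_⟩, ⟨?_, ?_⟩, ?_, ?_⟩ <;> first | trivial | omega
  · rintro ⟨i, ⟨a, x⟩, ⟨b, y⟩⟩ hz
    simp only [Finset.mem_sigma, Finset.mem_product, Nat.mem_divisorsAntidiagonal,
      mem_Ico] at hz
    obtain ⟨⟨hi1, hin⟩, ⟨hax, _⟩, hby, hni⟩ := hz
    dsimp only
    have ha : 0 < a := by rcases Nat.eq_zero_or_pos a with rfl | h; · simp at hax; omega
                          · exact h
    have hx : 0 < x := by rcases Nat.eq_zero_or_pos x with rfl | h; · simp at hax; omega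
                          · exact h
    have hb : 0 < b := by rcases Nat.eq_zero_or_pos b with rfl | h; · simp at hby; omega
                          · exact h
    have hy : 0 < y := by rcases Nat.eq_zero_or_pos y with rfl | h; · simp at hby; omega
                          · exact h
    exact mem_Tset.2 ⟨ha, hb, hx, hy, by omega⟩
  · rintro ⟨a, b, x, y⟩ _; rfl
  · rintro ⟨i, ⟨a, x⟩, ⟨b, y⟩⟩ hz
    simp only [Finset.mem_sigma, Finset.mem_product, Nat.mem_divisorsAntidiagonal,
      mem_Ico] at hz
    obtain ⟨⟨hi1, hin⟩, ⟨hax, _⟩, hby, hni⟩ := hz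
    dsimp only
    rw [show a * x = i from hax]
  · rintro ⟨a, b, x, y⟩ _; rfl

/-- trichotomy split of a sum. -/
lemma split3 {α : Type*} (s : Finset α) (f : α → ℤ) (g : α → ℕ) (h : α → ℕ)
    [DecidablePred fun p => g p < h p] [DecidablePred fun p => g p = h p]
    [DecidablePred fun p => h p < g p] :
    ∑ p ∈ s, f p = ∑ p ∈ s.filter (fun p => g p < h p), f p
      + ∑ p ∈ s.filter (fun p => g p = h p), f p
      + ∑ p ∈ s.filter (fun p => h p < g p), f p := by
  rw [← Finset.sum_filter_add_sum_filter_not s (fun p => g p < h p) f]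
  rw [← Finset.sum_filter_add_sum_filter_not (s.filter (fun p => ¬ g p < h p))
    (fun p => g p = h p) f, Finset.filter_filter, Finset.filter_filter]
  rw [add_assoc]
  congr 2
  · refine Finset.sum_congr (Finset.filter_congr ?_) (fun _ _ => rfl)
    intro p _
    constructor
    · rintro ⟨_, h2⟩; exact h2
    · intro h2; exact ⟨by omega, h2⟩
  · refine Finset.sum_congr (Finset.filter_congr ?_) (fun _ _ => rfl)
    intro p _
    constructor
    · rintro ⟨h1, h2⟩; omega
    · intro h2; exact ⟨by omega, by omega⟩

lemma pow1 (d : ℕ) : (∑ a ∈ Finset.Ico 1 d, (a : ℤ)) * 2 = (d : ℤ) ^ 2 - d := by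
  induction d with
  | zero => simp
  | succ k ih =>
    rcases Nat.eq_zero_or_pos k with rfl | hk
    · norm_num
    · rw [Finset.sum_Ico_succ_top hk]
      push_cast
      linear_combination ih

lemma pow2 (d : ℕ) : (∑ a ∈ Finset.Ico 1 d, (a : ℤ) ^ 2) * 6
    = 2 * (d : ℤ) ^ 3 - 3 * (d : ℤ) ^ 2 + d := by
  induction d with
  | zero => simp
  | succ k ih =>
    rcases Nat.eq_zero_or_pos k with rfl | hk
    · norm_num
    · rw [Finset.sum_Ico_succ_top hk]
      push_cast
      linear_combination ih

lemma pow3 (d : ℕ) : (∑ a ∈ Finset.Ico 1 d, (a : ℤ) ^ 3) * 4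
    = (d : ℤ) ^ 4 - 2 * (d : ℤ) ^ 3 + (d : ℤ) ^ 2 := by
  induction d with
  | zero => simp
  | succ k ih =>
    rcases Nat.eq_zero_or_pos k with rfl | hk
    · norm_num
    · rw [Finset.sum_Ico_succ_top hk]
      push_cast
      linear_combination ih

lemma pow4 (d : ℕ) : (∑ a ∈ Finset.Ico 1 d, (a : ℤ) ^ 4) * 30
    = 6 * (d : ℤ) ^ 5 - 15 * (d : ℤ) ^ 4 + 10 * (d : ℤ) ^ 3 - d := by
  induction d with
  | zero => simp
  | succ k ih =>
    rcases Nat.eq_zero_or_pos k with rfl | hk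
    · norm_num
    · rw [Finset.sum_Ico_succ_top hk]
      push_cast
      linear_combination ih

lemma pow0 (d : ℕ) (hd : 1 ≤ d) : ∑ _a ∈ Finset.Ico 1 d, (1 : ℤ) = (d : ℤ) - 1 := by
  rw [Finset.sum_const, Nat.card_Ico, nsmul_eq_mul, mul_one]
  push_cast [Nat.cast_sub hd]
  ring

/-- the key Faulhaber evaluation: `∑_{a=1}^{d-1} K(a, d-a)` where
`K(a,b) = 60a⁴+60b⁴+120a³b+120ab³+180a²b²`. -/
lemma diag_eval (d : ℕ) (hd : 1 ≤ d) :
    ∑ a ∈ Finset.Ico 1 d, (60 * (d : ℤ) ^ 4 * 1 - 120 * (d : ℤ) ^ 3 * (a : ℤ)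
        + 180 * (d : ℤ) ^ 2 * (a : ℤ) ^ 2 - 120 * (d : ℤ) * (a : ℤ) ^ 3
        + 60 * (a : ℤ) ^ 4)
      = 42 * (d : ℤ) ^ 5 - 60 * (d : ℤ) ^ 4 + 20 * (d : ℤ) ^ 3 - 2 * d := by
  rw [Finset.sum_add_distrib, Finset.sum_sub_distrib, Finset.sum_add_distrib,
    Finset.sum_sub_distrib, ← Finset.mul_sum, ← Finset.mul_sum, ← Finset.mul_sum,
    ← Finset.mul_sum, ← Finset.mul_sum]
  linear_combination 60 * (d : ℤ) ^ 4 * pow0 d hd - 60 * (d : ℤ) ^ 3 * pow1 d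
    + 30 * (d : ℤ) ^ 2 * pow2 d - 30 * (d : ℤ) * pow3 d + 2 * pow4 d

/-- For every `n ≥ 1`,
`21·σ₅(n) = 10(3n−1)·σ₃(n) + σ₁(n) + 240·Σ_{i+j=n, i,j≥1} σ₁(i)·σ₃(j)`. -/
theorem sigma_five_identity (n : ℕ) (hn : 1 ≤ n) :
    21 * sigmaNat 5 n =
      10 * (3 * n - 1) * sigmaNat 3 n + sigmaNat 1 n +
        240 * ∑ i ∈ Finset.Ico 1 n, sigmaNat 1 i * sigmaNat 3 (n - i) := by
  -- abbreviations for the three weights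
  set fS : ℕ → ℕ → ℤ := fun a b => (a : ℤ) * (b : ℤ) ^ 3 + (a : ℤ) ^ 3 * (b : ℤ) with hfS
  set fK : ℕ → ℕ → ℤ := fun a b => 60 * (a : ℤ) ^ 4 + 60 * (b : ℤ) ^ 4
      + 120 * (a : ℤ) ^ 3 * (b : ℤ) + 120 * (a : ℤ) * (b : ℤ) ^ 3
      + 180 * (a : ℤ) ^ 2 * (b : ℤ) ^ 2 with hfK
  set fG : ℕ → ℕ → ℤ := fun a b =>
      -60 * ((a : ℤ) ^ 2 - (a : ℤ) * (b : ℤ) + (b : ℤ) ^ 2) ^ 2 with hfG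
  -- Step 1: the convolution sum as a sum over quadruples
  have hW : ((∑ i ∈ Finset.Ico 1 n, sigmaNat 1 i * sigmaNat 3 (n - i) : ℕ) : ℤ)
      = ∑ p ∈ Tset n, (p.1 : ℤ) * (p.2.1 : ℤ) ^ 3 := by
    rw [sum_conv n (fun a b x y => (a : ℤ) * (b : ℤ) ^ 3)]
    push_cast
    refine Finset.sum_congr rfl ?_
    intro i _
    have e1 : (sigmaNat 1 i : ℤ) = ∑ q ∈ i.divisorsAntidiagonal, (q.1 : ℤ) := by
      rw [sigmaNat]
      push_cast
      rw [Nat.sum_divisorsAntidiagonal (fun d e => (d : ℤ))]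
      simp
    have e3 : (sigmaNat 3 (n - i) : ℤ)
        = ∑ r ∈ (n - i).divisorsAntidiagonal, (r.1 : ℤ) ^ 3 := by
      rw [sigmaNat]
      push_cast
      rw [Nat.sum_divisorsAntidiagonal (fun d e => (d : ℤ) ^ 3)]
    rw [e1, e3, Finset.sum_mul_sum]
  -- Step 2: symmetrize
  have h2W : 2 * ∑ p ∈ Tset n, (p.1 : ℤ) * (p.2.1 : ℤ) ^ 3
      = ∑ p ∈ Tset n, fS p.1 p.2.1 := by
    have hsw := sum_swap_all n (fun a b x y => (a : ℤ) * (b : ℤ) ^ 3)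
    rw [two_mul]
    nth_rewrite 2 [hsw]
    rw [← Finset.sum_add_distrib]
    refine Finset.sum_congr rfl ?_
    intro p _
    simp only [hfS]
    ring
  -- Step 3: trichotomy splits
  have hsplitS : ∑ p ∈ Tset n, fS p.1 p.2.1
      = 2 * ∑ p ∈ (Tset n).filter (fun p => p.2.1 < p.1), fS p.1 p.2.1
        + ∑ p ∈ (Tset n).filter (fun p => p.1 = p.2.1), fS p.1 p.2.1 := by
    rw [split3 (Tset n) (fun p => fS p.1 p.2.1) (fun p => p.1) (fun p => p.2.1)]
    have hsw := sum_swap_region n (fun p => p.1 < p.2.1) (fun a b x y => fS a b)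
    rw [hsw]
    have : ∑ p ∈ (Tset n).filter
        (fun p => (p.2.1, p.1, p.2.2.2, p.2.2.1).1 < (p.2.1, p.1, p.2.2.2, p.2.2.1).2.1),
          fS p.2.1 p.1
        = ∑ p ∈ (Tset n).filter (fun p => p.2.1 < p.1), fS p.1 p.2.1 := by
      refine Finset.sum_congr rfl ?_
      intro p _
      simp only [hfS]
      ring
    rw [this]
    ring
  have hsplitK_ab : ∑ p ∈ Tset n, fK p.1 p.2.1
      = 2 * ∑ p ∈ (Tset n).filter (fun p => p.2.1 < p.1), fK p.1 p.2.1
        + ∑ p ∈ (Tset n).filter (fun p => p.1 = p.2.1), fK p.1 p.2.1 := by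
    rw [split3 (Tset n) (fun p => fK p.1 p.2.1) (fun p => p.1) (fun p => p.2.1)]
    have hsw := sum_swap_region n (fun p => p.1 < p.2.1) (fun a b x y => fK a b)
    rw [hsw]
    have : ∑ p ∈ (Tset n).filter
        (fun p => (p.2.1, p.1, p.2.2.2, p.2.2.1).1 < (p.2.1, p.1, p.2.2.2, p.2.2.1).2.1),
          fK p.2.1 p.1
        = ∑ p ∈ (Tset n).filter (fun p => p.2.1 < p.1), fK p.1 p.2.1 := by
      refine Finset.sum_congr rfl ?_
      intro p _
      simp only [hfK]
      ring
    rw [this]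
    ring
  have hsplitK_xy : ∑ p ∈ Tset n, fK p.1 p.2.1
      = 2 * ∑ p ∈ (Tset n).filter (fun p => p.2.2.1 < p.2.2.2), fK p.1 p.2.1
        + ∑ p ∈ (Tset n).filter (fun p => p.2.2.1 = p.2.2.2), fK p.1 p.2.1 := by
    rw [split3 (Tset n) (fun p => fK p.1 p.2.1) (fun p => p.2.2.1) (fun p => p.2.2.2)]
    have hsw := sum_swap_region n (fun p => p.2.2.2 < p.2.2.1) (fun a b x y => fK a b)
    rw [hsw]
    have : ∑ p ∈ (Tset n).filter
        (fun p => (p.2.1, p.1, p.2.2.2, p.2.2.1).2.2.2 < (p.2.1, p.1, p.2.2.2, p.2.2.1).2.2.1),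
          fK p.2.1 p.1
        = ∑ p ∈ (Tset n).filter (fun p => p.2.2.1 < p.2.2.2), fK p.1 p.2.1 := by
      refine Finset.sum_congr rfl ?_
      intro p _
      simp only [hfK]
      ring
    rw [this]
    ring
  -- Step 4: the Liouville bijection applied to fG
  have hphi : ∑ p ∈ (Tset n).filter (fun p => p.2.1 < p.1), fG p.1 p.2.1
      = ∑ p ∈ (Tset n).filter (fun p => p.2.2.1 < p.2.2.2), fG (p.1 + p.2.1) p.2.1 :=
    sum_phi n (fun a b x y => fG a b)
  -- Step 5: pointwise vanishing on the x<y side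
  have hGK0 : ∑ p ∈ (Tset n).filter (fun p => p.2.2.1 < p.2.2.2),
      (fG (p.1 + p.2.1) p.2.1 + fK p.1 p.2.1) = 0 := by
    refine Finset.sum_eq_zero ?_
    intro p _
    simp only [hfG, hfK]
    push_cast
    ring
  -- Step 6: pointwise identity 240·fS = fG + fK on the b<a side
  have hGKS : 240 * ∑ p ∈ (Tset n).filter (fun p => p.2.1 < p.1), fS p.1 p.2.1
      = ∑ p ∈ (Tset n).filter (fun p => p.2.1 < p.1), fG p.1 p.2.1
        + ∑ p ∈ (Tset n).filter (fun p => p.2.1 < p.1), fK p.1 p.2.1 := by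
    rw [← Finset.sum_add_distrib, Finset.mul_sum]
    refine Finset.sum_congr rfl ?_
    intro p _
    simp only [hfG, hfK, hfS]
    ring
  have hGK0' : ∑ p ∈ (Tset n).filter (fun p => p.2.2.1 < p.2.2.2), fG (p.1 + p.2.1) p.2.1
      + ∑ p ∈ (Tset n).filter (fun p => p.2.2.1 < p.2.2.2), fK p.1 p.2.1 = 0 := by
    rw [← Finset.sum_add_distrib]
    exact hGK0
  -- Step 7: evaluate the two boundary sums
  have hxyK : ∑ p ∈ (Tset n).filter (fun p => p.2.2.1 = p.2.2.2), fK p.1 p.2.1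
      = ∑ d ∈ n.divisors,
          (42 * (d : ℤ) ^ 5 - 60 * (d : ℤ) ^ 4 + 20 * (d : ℤ) ^ 3 - 2 * d) := by
    rw [sum_diag_xy n (fun a b x y => fK a b)]
    refine Finset.sum_congr rfl ?_
    intro d hd
    have hd1 : 1 ≤ d := Nat.pos_of_mem_divisors hd
    have hinner : ∑ a ∈ Finset.Ico 1 d, fK a (d - a)
        = ∑ a ∈ Finset.Ico 1 d, (60 * (d : ℤ) ^ 4 * 1 - 120 * (d : ℤ) ^ 3 * (a : ℤ)
          + 180 * (d : ℤ) ^ 2 * (a : ℤ) ^ 2 - 120 * (d : ℤ) * (a : ℤ) ^ 3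
          + 60 * (a : ℤ) ^ 4) := by
      refine Finset.sum_congr rfl ?_
      intro a ha
      rw [mem_Ico] at ha
      have hlt : a ≤ d := by omega
      simp only [hfK]
      rw [Nat.cast_sub hlt]
      ring
    rw [hinner, diag_eval d hd1]
  have habK : ∑ p ∈ (Tset n).filter (fun p => p.1 = p.2.1), fK p.1 p.2.1
      = ∑ d ∈ n.divisors, 540 * (d : ℤ) ^ 4 * (((n / d : ℕ) : ℤ) - 1) := by
    rw [sum_diag_ab n (fun a b x y => fK a b)]
    refine Finset.sum_congr rfl ?_
    intro d hd
    rw [Nat.mem_divisors] at hd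
    have hd1 : 1 ≤ d := Nat.pos_of_dvd_of_pos hd.1 (Nat.pos_of_ne_zero hd.2)
    have he1 : 1 ≤ n / d := Nat.div_pos (Nat.le_of_dvd (Nat.pos_of_ne_zero hd.2) hd.1) hd1
    rw [Finset.sum_const, Nat.card_Ico, nsmul_eq_mul]
    push_cast [Nat.cast_sub he1]
    simp only [hfK]
    ring
  have habS : ∑ p ∈ (Tset n).filter (fun p => p.1 = p.2.1), fS p.1 p.2.1
      = ∑ d ∈ n.divisors, 2 * (d : ℤ) ^ 4 * (((n / d : ℕ) : ℤ) - 1) := by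
    rw [sum_diag_ab n (fun a b x y => fS a b)]
    refine Finset.sum_congr rfl ?_
    intro d hd
    rw [Nat.mem_divisors] at hd
    have hd1 : 1 ≤ d := Nat.pos_of_dvd_of_pos hd.1 (Nat.pos_of_ne_zero hd.2)
    have he1 : 1 ≤ n / d := Nat.div_pos (Nat.le_of_dvd (Nat.pos_of_ne_zero hd.2) hd.1) hd1
    rw [Finset.sum_const, Nat.card_Ico, nsmul_eq_mul]
    push_cast [Nat.cast_sub he1]
    simp only [hfS]
    ring
  -- Step 8: combine the divisor sums
  have hdiv : ∑ d ∈ n.divisors,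
        (42 * (d : ℤ) ^ 5 - 60 * (d : ℤ) ^ 4 + 20 * (d : ℤ) ^ 3 - 2 * d)
      - ∑ d ∈ n.divisors, 540 * (d : ℤ) ^ 4 * (((n / d : ℕ) : ℤ) - 1)
      + 240 * ∑ d ∈ n.divisors, 2 * (d : ℤ) ^ 4 * (((n / d : ℕ) : ℤ) - 1)
      = 42 * (sigmaNat 5 n : ℤ) - 60 * (n : ℤ) * (sigmaNat 3 n : ℤ)
        + 20 * (sigmaNat 3 n : ℤ) - 2 * (sigmaNat 1 n : ℤ) := by
    rw [Finset.mul_sum, ← Finset.sum_sub_distrib, ← Finset.sum_add_distrib]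
    have : ∀ d ∈ n.divisors,
        (42 * (d : ℤ) ^ 5 - 60 * (d : ℤ) ^ 4 + 20 * (d : ℤ) ^ 3 - 2 * d)
          - 540 * (d : ℤ) ^ 4 * (((n / d : ℕ) : ℤ) - 1)
          + 240 * (2 * (d : ℤ) ^ 4 * (((n / d : ℕ) : ℤ) - 1))
        = 42 * (d : ℤ) ^ 5 - 60 * (n : ℤ) * (d : ℤ) ^ 3 + 20 * (d : ℤ) ^ 3
          - 2 * (d : ℤ) := by
      intro d hd
      rw [Nat.mem_divisors] at hd
      have hde : ((n / d : ℕ) : ℤ) * (d : ℤ) = (n : ℤ) := by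
        rw [← Nat.cast_mul, Nat.div_mul_cancel hd.1]
      linear_combination (-60 * (d : ℤ) ^ 3) * hde
    rw [Finset.sum_congr rfl this]
    simp only [sigmaNat]
    push_cast
    rw [Finset.sum_sub_distrib, Finset.sum_add_distrib, Finset.sum_sub_distrib,
      ← Finset.mul_sum, ← Finset.mul_sum, ← Finset.mul_sum, ← Finset.mul_sum]
    ring_nf
  -- Step 9: assemble everything
  have key : 480 * ((∑ i ∈ Finset.Ico 1 n, sigmaNat 1 i * sigmaNat 3 (n - i) : ℕ) : ℤ)
      = 42 * (sigmaNat 5 n : ℤ) - 60 * (n : ℤ) * (sigmaNat 3 n : ℤ)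
        + 20 * (sigmaNat 3 n : ℤ) - 2 * (sigmaNat 1 n : ℤ) := by
    rw [← hdiv, ← hxyK, ← habK, ← habS, hW]
    linear_combination 240 * h2W + 240 * hsplitS + 2 * hGKS + 2 * hphi + 2 * hGK0'
      - hsplitK_ab + hsplitK_xy
  have hcast : ((2 * (21 * sigmaNat 5 n) : ℕ) : ℤ)
      = ((2 * (10 * (3 * n - 1) * sigmaNat 3 n + sigmaNat 1 n +
          240 * ∑ i ∈ Finset.Ico 1 n, sigmaNat 1 i * sigmaNat 3 (n - i)) : ℕ) : ℤ) := by
    have key' := key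
    push_cast at key'
    push_cast [Nat.cast_sub (show 1 ≤ 3 * n by omega)]
    linear_combination -key'
  exact Nat.eq_of_mul_eq_mul_left (by norm_num) (Nat.cast_injective hcast)
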